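/- Let α, β > −1. Then every real zero x of the Jacobi polynomial P_k^{(α,β)} satisfies A < x < B, where s = α+β+1, q = α−β, r = 2k+α+β+1, R = √((r²−q²+2s+1)(r²−s²)), A = −(R + q(s+1))/(r² + 2s + 1), and B = (R − q(s+1))/(r² + 2s + 1). -/

import Mathlib

/-!
`P = P_k^{(α,β)}` solves `(1 - x²) P'' + (β - α - (α + β + 2) x) P' + κ P = 0` with
`κ = k (k + α + β + 1)`, and `P > 0` on `[1, ∞)`. For every `d`, the Sonin-type function
`W(y) = (1 - y)^(α+1) (1 + y)^(β-d) ((1 + y) P'(y) + d P(y))` vanishes at `1` and, by the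
differential equation, has derivative `(1 - y)^α (1 + y)^(β-d-1) P(y) (E y - F)` on `(-1, 1)`,
where `E = d² - (α + β + 1) d - κ` and `F = d² + (α - β + 1) d + κ`. If the largest zero `w` of
`P` were `≥ B`, some `d` would make `E y - F` positive on `(w, 1)`; then `W` would increase
strictly on `[w, 1]`, although `W(w) = (1 - w)^(α+1) (1 + w)^(β-d+1) P'(w) ≥ 0 = W(1)`.
The lower bound is the upper bound for `P_k^{(β,α)}`, as `P_k^{(α,β)}(-x) = (-1)^k P_k^{(β,α)}(x)`.
-/

/-- The Jacobi polynomial `P_k^{(α,β)}` as a real function: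
`P_k^{(α,β)}(x) = ∑_{i=0}^{k} [(∏_{j=1}^{k−i}(α+i+j))/(k−i)!] · [(∏_{j=1}^{i}(β+k−i+j))/i!]
  · ((x−1)/2)^i · ((x+1)/2)^{k−i}`. -/
noncomputable def jacobi (k : ℕ) (α β : ℝ) (x : ℝ) : ℝ :=
  ∑ i ∈ Finset.range (k + 1),
    ((∏ j ∈ Finset.range (k - i), (α + (i : ℝ) + (j : ℝ) + 1)) /
      (Nat.factorial (k - i))) *
    ((∏ j ∈ Finset.range i, (β + ((k - i : ℕ) : ℝ) + (j : ℝ) + 1)) /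
      (Nat.factorial i)) *
    ((x - 1) / 2) ^ i * ((x + 1) / 2) ^ (k - i)

open Polynomial

section

open Finset

noncomputable def jacobiOperator (α β κ : ℝ) : ℝ[X] →ₗ[ℝ] ℝ[X] :=
  LinearMap.mulLeft ℝ (1 - X ^ 2) ∘ₗ derivative ∘ₗ derivative +
    LinearMap.mulLeft ℝ (C (β - α) - C (α + β + 2) * X) ∘ₗ derivative + κ • LinearMap.id

theorem jacobiOperator_apply (α β κ : ℝ) (p : ℝ[X]) :
    jacobiOperator α β κ p = (1 - X ^ 2) * derivative (derivative p) +
      (C (β - α) - C (α + β + 2) * X) * derivative p + C κ * p := by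
  simp [jacobiOperator, smul_eq_C_mul]

theorem X_sub_C_mul_derivative_pow {R : Type*} [CommRing R] (a : R) (n : ℕ) :
    (X - C a) * derivative ((X - C a) ^ n) = (n : R[X]) * (X - C a) ^ n := by
  rcases n with _ | n
  · simp
  · rw [derivative_X_sub_C_pow, C_eq_natCast]
    push_cast
    ring

theorem X_add_C_mul_derivative_pow {R : Type*} [CommRing R] (a : R) (n : ℕ) :
    (X + C a) * derivative ((X + C a) ^ n) = (n : R[X]) * (X + C a) ^ n := by
  simpa [sub_eq_add_neg] using X_sub_C_mul_derivative_pow (-a) n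

theorem mul_jacobiOperator_pow_mul_pow (α β : ℝ) (i j : ℕ) :
    (X - C 1) * (X + C 1) *
        jacobiOperator α β ((i + j) * (i + j + α + β + 1)) ((X - C 1) ^ i * (X + C 1) ^ j) =
      -2 * (C (i * (i + α)) * (X + C 1) - C (j * (j + β)) * (X - C 1)) *
        ((X - C 1) ^ i * (X + C 1) ^ j) := by
  set t := (X - C (1 : ℝ)) ^ i * (X + C 1) ^ j
  have h1 : (X - C 1) * (X + C 1) * derivative t =
      ((i : ℝ[X]) * (X + C 1) + (j : ℝ[X]) * (X - C 1)) * t := by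
    have hu := X_sub_C_mul_derivative_pow (1 : ℝ) i
    have hv := X_add_C_mul_derivative_pow (1 : ℝ) j
    simp only [t, derivative_mul]
    linear_combination (X + C 1) * (X + C 1) ^ j * hu + (X - C 1) * (X - C 1) ^ i * hv
  have h2 := congrArg derivative h1
  simp only [derivative_mul, derivative_sub, derivative_add, derivative_X, derivative_C,
    derivative_natCast] at h2
  rw [jacobiOperator_apply]
  simp only [map_add, map_mul, map_natCast, map_sub, map_one, C_ofNat] at h1 h2 ⊢
  linear_combination (-(X - 1) * (X + 1)) * h2 +
    (C β - C α - (C α + C β + 2) * X + (X - 1) + (X + 1) - (i * (X + 1) + j * (X - 1))) * h1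

theorem Finset.sum_range_succ_eq_of_shift {M : Type*} [AddCommMonoid M] (f g : ℕ → M) (k : ℕ)
    (h0 : f 0 = 0) (hk : g k = 0) (h : ∀ i < k, f (i + 1) = g i) :
    ∑ i ∈ range (k + 1), f i = ∑ i ∈ range (k + 1), g i := by
  rw [sum_range_succ', h0, sum_range_succ, hk, add_zero, add_zero]
  exact sum_congr rfl fun i hi => h i (mem_range.1 hi)

theorem jacobiOperator_sum_eq_zero (α β : ℝ) (k : ℕ) (c : ℕ → ℝ)
    (hc : ∀ i < k, (i + 1) * (i + 1 + α) * c (i + 1) = (k - i) * (k - i + β) * c i) :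
    jacobiOperator α β (k * (k + α + β + 1))
      (∑ i ∈ range (k + 1), c i • ((X - C 1) ^ i * (X + C 1) ^ (k - i))) = 0 := by
  set f : ℕ → ℝ[X] := fun i =>
    C (i * (i + α) * c i) * ((X - C 1) ^ i * (X + C 1) ^ (k + 1 - i))
  set g : ℕ → ℝ[X] := fun i =>
    C ((k - i) * (k - i + β) * c i) * ((X - C 1) ^ (i + 1) * (X + C 1) ^ (k - i))
  have hterm : ∀ i ∈ range (k + 1), (X - C 1) * (X + C 1) *
      jacobiOperator α β (k * (k + α + β + 1)) (c i • ((X - C 1) ^ i * (X + C 1) ^ (k - i))) =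
        2 * (g i - f i) := by
    intro i hi
    have hik : i ≤ k := Nat.lt_succ_iff.1 (mem_range.1 hi)
    have hk : (k : ℝ) = i + (k - i : ℕ) := by rw [Nat.cast_sub hik]; ring
    rw [map_smul, mul_smul_comm, hk, mul_jacobiOperator_pow_mul_pow, Nat.cast_sub hik]
    simp only [f, g, Nat.succ_sub hik, pow_succ, smul_eq_C_mul, map_mul, map_sub, map_add,
      map_natCast]
    ring
  -- the coefficient recurrence makes the images of the monomials telescope
  have hfg : ∑ i ∈ range (k + 1), f i = ∑ i ∈ range (k + 1), g i := by
    refine Finset.sum_range_succ_eq_of_shift f g k (by simp [f]) (by simp [g]) fun i hi => ?_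
    simp only [f, g, Nat.cast_succ, Nat.add_sub_add_right]
    rw [hc i hi]
  have hUV : (X - C 1) * (X + C (1 : ℝ)) ≠ 0 :=
    mul_ne_zero (X_sub_C_ne_zero 1) (X_add_C_ne_zero 1)
  refine (mul_eq_zero.1 ?_).resolve_left hUV
  rw [map_sum, mul_sum, sum_congr rfl hterm, ← mul_sum, sum_sub_distrib, hfg, sub_self, mul_zero]

noncomputable def jacobiCoeff (k : ℕ) (α β : ℝ) (i : ℕ) : ℝ :=
  (∏ j ∈ range (k - i), (α + (i : ℝ) + (j : ℝ) + 1)) / (k - i).factorial *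
    ((∏ j ∈ range i, (β + ((k - i : ℕ) : ℝ) + (j : ℝ) + 1)) / i.factorial)

theorem jacobi_eq_sum (k : ℕ) (α β x : ℝ) :
    jacobi k α β x =
      ∑ i ∈ range (k + 1), jacobiCoeff k α β i * (((x - 1) / 2) ^ i * ((x + 1) / 2) ^ (k - i)) :=
  sum_congr rfl fun _ _ => by rw [jacobiCoeff]; ring

theorem jacobiCoeff_pos {α β : ℝ} (hα : -1 < α) (hβ : -1 < β) (k i : ℕ) :
    0 < jacobiCoeff k α β i := by
  have hA : 0 < ∏ j ∈ range (k - i), (α + (i : ℝ) + (j : ℝ) + 1) :=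
    prod_pos fun j _ => by linarith [(i.cast_nonneg : (0 : ℝ) ≤ i), (j.cast_nonneg : (0 : ℝ) ≤ j)]
  have hB : 0 < ∏ j ∈ range i, (β + ((k - i : ℕ) : ℝ) + (j : ℝ) + 1) :=
    prod_pos fun j _ => by
      linarith [((k - i).cast_nonneg : (0 : ℝ) ≤ (k - i : ℕ)), (j.cast_nonneg : (0 : ℝ) ≤ j)]
  unfold jacobiCoeff
  positivity

theorem jacobiCoeff_succ (k : ℕ) (α β : ℝ) {i : ℕ} (hi : i < k) :
    (i + 1) * (i + 1 + α) * jacobiCoeff k α β (i + 1) =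
      (k - i) * (k - i + β) * jacobiCoeff k α β i := by
  obtain ⟨j, rfl⟩ : ∃ j, k = i + (j + 1) := ⟨k - i - 1, by omega⟩
  rw [jacobiCoeff, jacobiCoeff, show i + (j + 1) - (i + 1) = j by omega,
    show i + (j + 1) - i = j + 1 by omega, prod_range_succ', prod_range_succ',
    Nat.factorial_succ i, Nat.factorial_succ j]
  push_cast
  have hA : ∏ m ∈ range j, (α + (i : ℝ) + ((m + 1 : ℕ) : ℝ) + 1) =
      ∏ m ∈ range j, (α + ((i : ℝ) + 1) + (m : ℝ) + 1) :=
    prod_congr rfl fun m _ => by push_cast; ring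
  have hB : ∏ m ∈ range i, (β + (j : ℝ) + ((m + 1 : ℕ) : ℝ) + 1) =
      ∏ m ∈ range i, (β + ((j : ℝ) + 1) + (m : ℝ) + 1) :=
    prod_congr rfl fun m _ => by push_cast; ring
  simp only [Nat.cast_succ] at hA hB
  rw [hA, hB]
  field_simp
  ring

noncomputable def jacobiPoly (k : ℕ) (α β : ℝ) : ℝ[X] :=
  ∑ i ∈ range (k + 1), (jacobiCoeff k α β i / 2 ^ k) • ((X - C 1) ^ i * (X + C 1) ^ (k - i))

theorem eval_jacobiPoly (k : ℕ) (α β x : ℝ) : (jacobiPoly k α β).eval x = jacobi k α β x := by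
  rw [jacobi_eq_sum, jacobiPoly, eval_finsetSum]
  refine sum_congr rfl fun i hi => ?_
  have h2 : (2 : ℝ) ^ k = 2 ^ i * 2 ^ (k - i) := by
    rw [← pow_add, Nat.add_sub_cancel' (Nat.lt_succ_iff.1 (mem_range.1 hi))]
  simp only [eval_smul, eval_mul, eval_pow, eval_sub, eval_add, eval_X, eval_C, smul_eq_mul,
    div_pow, h2]
  field_simp

theorem jacobiOperator_jacobiPoly (k : ℕ) (α β : ℝ) :
    jacobiOperator α β (k * (k + α + β + 1)) (jacobiPoly k α β) = 0 :=
  jacobiOperator_sum_eq_zero α β k _ fun i hi => by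
    rw [← mul_div_assoc, jacobiCoeff_succ k α β hi, mul_div_assoc]

theorem jacobi_pos_of_one_le {α β : ℝ} (hα : -1 < α) (hβ : -1 < β) (k : ℕ) {x : ℝ}
    (hx : 1 ≤ x) : 0 < jacobi k α β x := by
  rw [jacobi_eq_sum]
  refine sum_pos' (fun i _ => ?_) ⟨0, by simp, ?_⟩
  · have := jacobiCoeff_pos hα hβ k i
    have hu : 0 ≤ (x - 1) / 2 := by linarith
    positivity
  · have := jacobiCoeff_pos hα hβ k 0
    have hv : 0 < (x + 1) / 2 := by linarith
    simpa using mul_pos this (pow_pos hv k)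

theorem jacobi_neg (k : ℕ) (α β x : ℝ) : jacobi k α β (-x) = (-1) ^ k * jacobi k β α x := by
  rw [jacobi_eq_sum, jacobi_eq_sum, mul_sum, ← sum_range_reflect]
  refine sum_congr rfl fun j hj => ?_
  have hjk : j ≤ k := Nat.lt_succ_iff.1 (mem_range.1 hj)
  have hcoeff : jacobiCoeff k α β (k - j) = jacobiCoeff k β α j := by
    rw [jacobiCoeff, jacobiCoeff, Nat.sub_sub_self hjk]
    ring
  have hsign : (-1 : ℝ) ^ k = (-1) ^ (k - j) * (-1) ^ j := by
    rw [← pow_add, Nat.sub_add_cancel hjk]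
  rw [Nat.add_sub_cancel, hcoeff, Nat.sub_sub_self hjk, hsign,
    show (-x - 1) / 2 = -((x + 1) / 2) by ring, show (-x + 1) / 2 = -((x - 1) / 2) by ring,
    neg_pow ((x + 1) / 2), neg_pow ((x - 1) / 2)]
  ring

theorem jacobi_zero_mem_Ioo {α β : ℝ} (hα : -1 < α) (hβ : -1 < β) {k : ℕ} {x : ℝ}
    (hx : jacobi k α β x = 0) : x ∈ Set.Ioo (-1) 1 := by
  constructor
  · by_contra! h
    have hpos := jacobi_pos_of_one_le hβ hα k (le_neg_of_le_neg h)
    have := jacobi_neg k α β (-x)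
    rw [neg_neg, hx] at this
    exact (mul_ne_zero (pow_ne_zero k (by norm_num)) hpos.ne') this.symm
  · by_contra! h
    exact (jacobi_pos_of_one_le hα hβ k h).ne' hx

end

open Set

theorem exists_last_zero_of_continuousOn {f : ℝ → ℝ} {a b : ℝ} (hf : ContinuousOn f (Icc a b))
    (hab : a ≤ b) (ha : f a = 0) (hb : 0 < f b) :
    ∃ w ∈ Ico a b, f w = 0 ∧ ∀ y ∈ Ioc w b, 0 < f y := by
  set Z := Icc a b ∩ f ⁻¹' {0}
  have hZ : IsClosed Z := hf.preimage_isClosed_of_isClosed isClosed_Icc isClosed_singleton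
  have hZbdd : BddAbove Z := ⟨b, fun y hy => hy.1.2⟩
  have hwZ : sSup Z ∈ Z := hZ.csSup_mem ⟨a, ⟨le_rfl, hab⟩, ha⟩ hZbdd
  have hw0 : f (sSup Z) = 0 := hwZ.2
  refine ⟨sSup Z, ⟨hwZ.1.1, hwZ.1.2.lt_of_ne fun h => ?_⟩, hw0, fun y hy => ?_⟩
  · rw [h] at hw0
    exact hb.ne' hw0
  by_contra! hy0
  obtain ⟨z, hz, hz0⟩ := intermediate_value_Icc hy.2
    (hf.mono (Icc_subset_Icc (hwZ.1.1.trans hy.1.le) le_rfl)) ⟨hy0, hb.le⟩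
  have : z ≤ sSup Z := le_csSup hZbdd ⟨⟨hwZ.1.1.trans (hy.1.le.trans hz.1), hz.2⟩, hz0⟩
  linarith [hy.1, hz.1]

theorem HasDerivAt.nonneg_of_le_on_Ioo {f : ℝ → ℝ} {f' w b : ℝ} (hf : HasDerivAt f f' w)
    (hwb : w < b) (hle : ∀ y ∈ Ioo w b, f w ≤ f y) : 0 ≤ f' := by
  refine ge_of_tendsto hf.tendsto_slope_zero_right ?_
  filter_upwards [Ioo_mem_nhdsGT (sub_pos.2 hwb)] with t ht
  have := hle (w + t) ⟨by linarith [ht.1], by linarith [ht.2]⟩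
  exact smul_nonneg (inv_nonneg.2 ht.1.le) (sub_nonneg.2 this)

noncomputable def soninFunction (p : ℝ[X]) (α β d y : ℝ) : ℝ :=
  (1 - y) ^ (α + 1) * (1 + y) ^ (β - d) * ((1 + y) * p.derivative.eval y + d * p.eval y)

section Sonin

variable {p : ℝ[X]} {α β κ d : ℝ}

theorem hasDerivAt_soninFunction (hp : jacobiOperator α β κ p = 0) {y : ℝ}
    (hy : y ∈ Ioo (-1) 1) :
    HasDerivAt (soninFunction p α β d)
      ((1 - y) ^ α * (1 + y) ^ (β - d - 1) *
        (p.eval y * ((d ^ 2 - (α + β + 1) * d - κ) * y - (d ^ 2 + (α - β + 1) * d + κ)))) y := by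
  have hu : 0 < 1 - y := by linarith [hy.2]
  have hv : 0 < 1 + y := by linarith [hy.1]
  have hode := congrArg (eval y) hp
  simp only [jacobiOperator_apply, eval_add, eval_mul, eval_sub, eval_pow, eval_one, eval_X,
    eval_C, eval_zero] at hode
  have hu' := ((hasDerivAt_id y).const_sub 1).rpow_const (p := α + 1) (Or.inl hu.ne')
  have hv' := ((hasDerivAt_id y).const_add 1).rpow_const (p := β - d) (Or.inl hv.ne')
  have hG := (((hasDerivAt_id y).const_add 1).mul (p.derivative.hasDerivAt y)).add
    ((p.hasDerivAt y).const_mul d)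
  have hv'' : (1 + y) ^ (β - d) = (1 + y) ^ (β - d - 1) * (1 + y) := by
    rw [← Real.rpow_add_one hv.ne', sub_add_cancel]
  refine ((hu'.mul hv').mul hG).congr_deriv ?_
  simp only [id, Pi.mul_apply, Pi.add_apply, add_sub_cancel_right, Real.rpow_add_one hu.ne', hv'']
  linear_combination (1 - y) ^ α * (1 + y) ^ (β - d - 1) * (1 + y) * hode

theorem continuousOn_soninFunction (hα : -1 < α) {w : ℝ} (hw : -1 < w) :
    ContinuousOn (soninFunction p α β d) (Icc w 1) := by
  have hu : Continuous fun y : ℝ => (1 - y) ^ (α + 1) :=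
    (Real.continuous_rpow_const (by linarith)).comp (continuous_const.sub continuous_id)
  have hv : ContinuousOn (fun y : ℝ => (1 + y) ^ (β - d)) (Icc w 1) :=
    ContinuousOn.rpow_const (by fun_prop) fun y hy => Or.inl (by linarith [hy.1])
  exact (hu.continuousOn.mul hv).mul (by fun_prop)

theorem soninFunction_one (hα : -1 < α) : soninFunction p α β d 1 = 0 := by
  simp [soninFunction, Real.zero_rpow (by linarith : α + 1 ≠ 0)]

theorem soninFunction_nonneg {w : ℝ} (hw : w ∈ Icc (-1) 1) (hpw : p.eval w = 0)
    (hdw : 0 ≤ p.derivative.eval w) : 0 ≤ soninFunction p α β d w := by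
  have hu : 0 ≤ 1 - w := by linarith [hw.2]
  have hv : 0 ≤ 1 + w := by linarith [hw.1]
  rw [soninFunction, hpw, mul_zero, add_zero]
  positivity

theorem strictMonoOn_soninFunction (hp : jacobiOperator α β κ p = 0) (hα : -1 < α) {w : ℝ}
    (hw : -1 < w) (hpos : ∀ y ∈ Ioo w 1, 0 < p.eval y)
    (hlin : ∀ y ∈ Ioo w 1,
      0 < (d ^ 2 - (α + β + 1) * d - κ) * y - (d ^ 2 + (α - β + 1) * d + κ)) :
    StrictMonoOn (soninFunction p α β d) (Icc w 1) := by
  refine strictMonoOn_of_deriv_pos (convex_Icc w 1) (continuousOn_soninFunction hα hw)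
    fun y hy => ?_
  rw [interior_Icc] at hy
  have hu : 0 < 1 - y := by linarith [hy.2]
  have hv : 0 < 1 + y := by linarith [hy.1]
  rw [(hasDerivAt_soninFunction hp ⟨by linarith [hy.1], hy.2⟩).deriv]
  have := hpos y hy
  have := hlin y hy
  positivity

theorem exists_sonin_linear_nonpos (hp : jacobiOperator α β κ p = 0) (hα : -1 < α) {w : ℝ}
    (hw : w ∈ Ioo (-1) 1) (hpw : p.eval w = 0) (hpos : ∀ y ∈ Ioo w 1, 0 < p.eval y)
    (d : ℝ) : ∃ y ∈ Ioo w 1,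
      (d ^ 2 - (α + β + 1) * d - κ) * y - (d ^ 2 + (α - β + 1) * d + κ) ≤ 0 := by
  by_contra! hlin
  have hdw : 0 ≤ p.derivative.eval w :=
    (p.hasDerivAt w).nonneg_of_le_on_Ioo hw.2 fun y hy => hpw ▸ (hpos y hy).le
  have hmono := strictMonoOn_soninFunction (β := β) (d := d) hp hα hw.1 hpos hlin
  have := hmono (left_mem_Icc.2 hw.2.le) (right_mem_Icc.2 hw.2.le) hw.2
  rw [soninFunction_one hα] at this
  exact this.not_ge (soninFunction_nonneg (Ioo_subset_Icc_self hw) hpw hdw)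

end Sonin

section Bound

variable {α β κ c w : ℝ}

theorem mul_one_sub_lt_of_bound_le (ha : 0 < α + 1) (hb : 0 < β + 1) (hκ : α + β + 2 ≤ κ)
    (hc : 0 ≤ c) (hc2 : c ^ 2 = κ * (κ + (α + 1) * (β + 1)))
    (hw : (4 * c - (α - β) * (α + β + 2)) / ((α + β + 2) ^ 2 + 4 * κ) ≤ w) :
    2 * (κ + c) * (1 - w) < (α + 1) * ((α + β + 1) * w + α - β + 1) := by
  set D := (α + β + 2) ^ 2 + 4 * κ
  set B := (4 * c - (α - β) * (α + β + 2)) / D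
  have hD : 0 < D := by nlinarith
  have hP : 2 * c < (α + 1) * (α + β + 2) + 2 * κ := by
    refine lt_of_pow_lt_pow_left₀ 2 (by nlinarith) ?_
    have : ((α + 1) * (α + β + 2) + 2 * κ) ^ 2 - (2 * c) ^ 2 = (α + 1) ^ 2 * D := by
      linear_combination -4 * hc2
    nlinarith [mul_pos (mul_pos ha ha) hD]
  have hB : ((α + 1) * ((α + β + 1) * B + α - β + 1) - 2 * (κ + c) * (1 - B)) * D =
      2 * (α + 1) * ((α + 1) * (α + β + 2) + 2 * κ - 2 * c) := by
    simp only [B]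
    field_simp
    linear_combination 8 * hc2
  have hB_pos : 0 < (α + 1) * ((α + β + 1) * B + α - β + 1) - 2 * (κ + c) * (1 - B) :=
    pos_of_mul_pos_left (hB ▸ by nlinarith) hD.le
  have hslope : 0 < (α + 1) * (α + β + 1) + 2 * (κ + c) := by nlinarith [mul_pos ha hb]
  nlinarith [mul_nonneg hslope.le (sub_nonneg.2 hw)]

theorem exists_sonin_exponent (ha : 0 < α + 1) (hκ : 0 ≤ κ) (hc : 0 ≤ c)
    (hc2 : c ^ 2 = κ * (κ + (α + 1) * (β + 1))) (hw : w < 1)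
    (hmargin : 2 * (κ + c) * (1 - w) < (α + 1) * ((α + β + 1) * w + α - β + 1)) :
    ∃ d : ℝ, ∀ y ∈ Ioo w 1,
      0 < (d ^ 2 - (α + β + 1) * d - κ) * y - (d ^ 2 + (α - β + 1) * d + κ) := by
  set S := (α + β + 1) * w + α - β + 1
  set m := (α + 1) * S - 2 * κ * (1 - w)
  have hw' : 0 < 1 - w := by linarith
  -- `F - E w` is a quadratic in `d`, minimal at this `d`, with discriminant `S² - 4κ(1 - w²)`.
  refine ⟨-S / (2 * (1 - w)), fun y hy => ?_⟩
  set d := -S / (2 * (1 - w))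
  set E := d ^ 2 - (α + β + 1) * d - κ
  set F := d ^ 2 + (α - β + 1) * d + κ
  have hm : 2 * c * (1 - w) < m := by linarith
  have hEF : (E - F) * (1 - w) = m := by
    simp only [E, F, d, m, S]
    field_simp
    ring
  have hEwF : (E * w - F) * (4 * (1 - w)) = S ^ 2 - 4 * κ * (1 - w ^ 2) := by
    simp only [E, F, d, S]
    field_simp
    ring
  have hdisc : (α + 1) ^ 2 * (S ^ 2 - 4 * κ * (1 - w ^ 2)) =
      m ^ 2 - (2 * c * (1 - w)) ^ 2 + 4 * κ * (α + 1) * (1 - w) ^ 2 := by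
    simp only [m, S]
    linear_combination 4 * (1 - w) ^ 2 * hc2
  clear_value E F d m S
  have hcw : 0 ≤ 2 * c * (1 - w) := by positivity
  have hE_F : 0 < E - F := pos_of_mul_pos_left (hEF ▸ hcw.trans_lt hm) hw'.le
  have hdisc_pos : 0 < S ^ 2 - 4 * κ * (1 - w ^ 2) := by
    refine pos_of_mul_pos_right ?_ (sq_nonneg (α + 1))
    rw [hdisc]
    nlinarith [mul_self_lt_mul_self hcw hm, mul_nonneg (mul_nonneg hκ ha.le) (sq_nonneg (1 - w))]
  have hEw_F : 0 ≤ E * w - F :=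
    nonneg_of_mul_nonneg_left (hEwF ▸ hdisc_pos.le) (by positivity : (0 : ℝ) < 4 * (1 - w))
  have key : (E * y - F) * (1 - w) = (E * w - F) * (1 - y) + (E - F) * (y - w) := by ring
  have h1 : 0 < (E * y - F) * (1 - w) := by
    rw [key]
    nlinarith [hy.1, hy.2]
  exact pos_of_mul_pos_left h1 hw'.le

end Bound

theorem jacobi_zero_lt {k : ℕ} (hk : 1 ≤ k) {α β : ℝ} (hα : -1 < α) (hβ : -1 < β) {κ c : ℝ}
    (hκ : κ = k * (k + α + β + 1)) (hc : c = √(κ * (κ + (α + 1) * (β + 1)))) {x : ℝ}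
    (hx : jacobi k α β x = 0) :
    x < (4 * c - (α - β) * (α + β + 2)) / ((α + β + 2) ^ 2 + 4 * κ) := by
  by_contra! hB
  have hκ' : α + β + 2 ≤ κ := by
    have : (1 : ℝ) ≤ k := by exact_mod_cast hk
    rw [hκ]; nlinarith
  have hκ0 : 0 ≤ κ := by linarith
  have hab : 0 < (α + 1) * (β + 1) := mul_pos (by linarith) (by linarith)
  have hc0 : 0 ≤ c := hc ▸ Real.sqrt_nonneg _
  have hc2 : c ^ 2 = κ * (κ + (α + 1) * (β + 1)) := by
    rw [hc, Real.sq_sqrt (by positivity)]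
  have hp := jacobiOperator_jacobiPoly k α β
  rw [← hκ] at hp
  have heval := eval_jacobiPoly k α β
  obtain ⟨w, ⟨hxw, hw1⟩, hpw, hpos⟩ := exists_last_zero_of_continuousOn
    (jacobiPoly k α β).continuous.continuousOn (jacobi_zero_mem_Ioo hα hβ hx).2.le
    (by rw [heval, hx]) (by rw [heval]; exact jacobi_pos_of_one_le hα hβ k le_rfl)
  obtain ⟨d, hd⟩ := exists_sonin_exponent (by linarith) hκ0 hc0 hc2 hw1
    (mul_one_sub_lt_of_bound_le (by linarith) (by linarith) hκ' hc0 hc2 (hB.trans hxw))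
  obtain ⟨y, hy, hle⟩ := exists_sonin_linear_nonpos hp hα
    ⟨(jacobi_zero_mem_Ioo hα hβ hx).1.trans_le hxw, hw1⟩ hpw
    (fun y hy => hpos y (Ioo_subset_Ioc_self hy)) d
  exact hle.not_gt (hd y hy)

/-- Every real zero `x` of `P_k^{(α,β)}` satisfies `A < x < B`. -/
theorem jacobi_zeros_in_interval
    (k : ℕ) (hk : 1 ≤ k) (α β : ℝ) (hα : -1 < α) (hβ : -1 < β)
    (s q r R : ℝ)
    (hs : s = α + β + 1) (hq : q = α - β) (hr : r = 2 * (k : ℝ) + α + β + 1)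
    (hR : R = Real.sqrt ((r ^ 2 - q ^ 2 + 2 * s + 1) * (r ^ 2 - s ^ 2)))
    (A : ℝ) (hA : A = -(R + q * (s + 1)) / (r ^ 2 + 2 * s + 1))
    (B : ℝ) (hB : B = (R - q * (s + 1)) / (r ^ 2 + 2 * s + 1)) :
    ∀ x : ℝ, jacobi k α β x = 0 → A < x ∧ x < B := by
  intro x hx
  set κ : ℝ := k * (k + α + β + 1) with hκ
  set c := √(κ * (κ + (α + 1) * (β + 1))) with hc
  have hR' : R = 4 * c := by
    have : (r ^ 2 - q ^ 2 + 2 * s + 1) * (r ^ 2 - s ^ 2) = κ * (κ + (α + 1) * (β + 1)) * 4 ^ 2 := by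
      rw [hr, hq, hs]; ring
    rw [hR, this, Real.sqrt_mul' _ (by positivity), Real.sqrt_sq (by norm_num), mul_comm]
  have hden : r ^ 2 + 2 * s + 1 = (α + β + 2) ^ 2 + 4 * κ := by rw [hr, hs]; ring
  constructor
  · have hneg : jacobi k β α (-x) = 0 := by rw [jacobi_neg, hx, mul_zero]
    have := jacobi_zero_lt hk hβ hα (κ := κ) (c := c) (by ring) (by rw [hc, mul_comm (β + 1)]) hneg
    rw [hA, hR', hden, hq, hs]
    linarith [show -(4 * c + (α - β) * (α + β + 1 + 1)) / ((α + β + 2) ^ 2 + 4 * κ) =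
      -((4 * c - (β - α) * (β + α + 2)) / ((β + α + 2) ^ 2 + 4 * κ)) by ring]
  · rw [hB, hR', hden, hq, hs]
    convert jacobi_zero_lt hk hα hβ hκ hc hx using 2
    ring
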